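/- In the binary potential-outcomes setup with instrument z independent of potential treatments and outcomes, if there are both compliers (x₀=0, x₁=1) with proportion π_c > 0 and defiers (x₀=1, x₁=0) with proportion π_d, with π_c ≠ π_d, then the Wald estimator equals E(β | compliers)·π_c/(π_c - π_d) - E(β | defiers)·π_d/(π_c - π_d), where β(ω) = y₁(ω) - y₀(ω); in particular if π_d > 0 one of the two weights π_c/(π_c - π_d), -π_d/(π_c - π_d) is negative. -/

import Mathlib

/-!
Since `z` is independent of `(x₀, x₁, y₀, y₁)`, conditioning on `z = 1` or on `z = 0` leaves the
expectation of any function of these unchanged. On `z = 1` we have `y = y₀ + β x₁` and on `z = 0`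
we have `y = y₀ + β x₀`, so the reduced form is `E[β (x₁ - x₀)]` and the first stage is
`E[x₁ - x₀]`. For binary treatments `x₁ - x₀` is the complier indicator minus the defier
indicator, which turns these into `E[β | c] π_c - E[β | d] π_d` and `π_c - π_d`.
-/

open scoped Classical

noncomputable section

variable {Ω : Type*} [Fintype Ω]

def expec (P f : Ω → ℝ) : ℝ := ∑ ω, P ω * f ω

def pr (P : Ω → ℝ) (s : Ω → Prop) : ℝ := ∑ ω, if s ω then P ω else 0

def condExp (P f : Ω → ℝ) (s : Ω → Prop) : ℝ :=
  (∑ ω, if s ω then P ω * f ω else 0) / pr P s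

open Finset

def Uncorrelated (P u v : Ω → ℝ) : Prop :=
  expec P (fun ω => u ω * v ω) = expec P u * expec P v

section FiniteExpectation

variable (P : Ω → ℝ)

lemma expec_sub (f g : Ω → ℝ) :
    expec P (fun ω => f ω - g ω) = expec P f - expec P g := by
  simp only [expec, mul_sub, sum_sub_distrib]

lemma pr_eq_sum (s : Ω → Prop) [DecidablePred s] :
    pr P s = ∑ ω, if s ω then P ω else 0 := by
  unfold pr
  refine sum_congr rfl fun ω _ => ?_
  split_ifs <;> rfl

lemma pr_eq_expec_indicator (s : Ω → Prop) [DecidablePred s] :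
    pr P s = expec P (fun ω => if s ω then 1 else 0) := by
  rw [pr_eq_sum]
  refine sum_congr rfl fun ω _ => ?_
  by_cases h : s ω <;> simp [h]

lemma expec_indicator_mul (s : Ω → Prop) [DecidablePred s] (f : Ω → ℝ) :
    expec P (fun ω => (if s ω then 1 else 0) * f ω) = ∑ ω, if s ω then P ω * f ω else 0 := by
  refine sum_congr rfl fun ω _ => ?_
  by_cases h : s ω <;> simp [h]

lemma condExp_eq_sum_div (s : Ω → Prop) [DecidablePred s] (f : Ω → ℝ) :
    condExp P f s = (∑ ω, if s ω then P ω * f ω else 0) / pr P s := by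
  unfold condExp
  congr 1
  refine sum_congr rfl fun ω _ => ?_
  split_ifs <;> rfl

lemma sum_ite_mul_eq_condExp_mul_pr {s : Ω → Prop} [DecidablePred s] (hs : pr P s ≠ 0)
    (f : Ω → ℝ) : (∑ ω, if s ω then P ω * f ω else 0) = condExp P f s * pr P s := by
  rw [condExp_eq_sum_div, div_mul_cancel₀ _ hs]

lemma condExp_congr {s : Ω → Prop} {f g : Ω → ℝ} (h : ∀ ω, s ω → f ω = g ω) :
    condExp P f s = condExp P g s := by
  unfold condExp
  congr 1
  refine sum_congr rfl fun ω _ => ?_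
  split_ifs with hω
  · rw [h ω hω]
  · rfl

lemma condExp_eq_expec_of_uncorrelated {s : Ω → Prop} [DecidablePred s] {f : Ω → ℝ}
    (hf : Uncorrelated P (fun ω => if s ω then 1 else 0) f) (hs : pr P s ≠ 0) :
    condExp P f s = expec P f := by
  rw [condExp_eq_sum_div, ← expec_indicator_mul, hf, ← pr_eq_expec_indicator,
    mul_div_cancel_left₀ _ hs]

variable {P}

lemma Uncorrelated.indicator_compl (hP : ∑ ω, P ω = 1) {s : Ω → Prop} [DecidablePred s]
    {f : Ω → ℝ} (hf : Uncorrelated P (fun ω => if s ω then 1 else 0) f) :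
    Uncorrelated P (fun ω => if ¬ s ω then 1 else 0) f := by
  have hcompl : ∀ g : Ω → ℝ, expec P (fun ω => (if ¬ s ω then 1 else 0) * g ω)
      = expec P g - expec P (fun ω => (if s ω then 1 else 0) * g ω) := by
    intro g
    rw [← expec_sub]
    refine sum_congr rfl fun ω _ => ?_
    by_cases h : s ω <;> simp [h]
  have hone : expec P (fun _ => 1) = 1 := by simpa [expec] using hP
  have hcompl_one := hcompl fun _ => 1
  simp only [mul_one] at hcompl_one
  rw [Uncorrelated, hcompl, hcompl_one, hf, hone]
  ring

end FiniteExpectation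

lemma cast_sub_cast_eq_ite {a b : ℕ} (ha : a ≤ 1) (hb : b ≤ 1) :
    (b : ℝ) - a = (if a = 0 ∧ b = 1 then 1 else 0) - (if a = 1 ∧ b = 0 then 1 else 0) := by
  interval_cases a <;> interval_cases b <;> norm_num

section BinaryTreatment

variable (P : Ω → ℝ) {x0 x1 : Ω → ℕ}

lemma expec_mul_sub_of_binary (hx0 : ∀ ω, x0 ω ≤ 1) (hx1 : ∀ ω, x1 ω ≤ 1) (f : Ω → ℝ) :
    expec P (fun ω => f ω * ((x1 ω : ℝ) - x0 ω)) =
      (∑ ω, if x0 ω = 0 ∧ x1 ω = 1 then P ω * f ω else 0)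
        - ∑ ω, if x0 ω = 1 ∧ x1 ω = 0 then P ω * f ω else 0 := by
  rw [← sum_sub_distrib]
  refine sum_congr rfl fun ω _ => ?_
  dsimp only
  rw [cast_sub_cast_eq_ite (hx0 ω) (hx1 ω)]
  split_ifs <;> ring

lemma expec_sub_of_binary (hx0 : ∀ ω, x0 ω ≤ 1) (hx1 : ∀ ω, x1 ω ≤ 1) :
    expec P (fun ω => (x1 ω : ℝ) - x0 ω) =
      pr P (fun ω => x0 ω = 0 ∧ x1 ω = 1) - pr P (fun ω => x0 ω = 1 ∧ x1 ω = 0) := by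
  simpa only [one_mul, mul_one, ← pr_eq_sum] using expec_mul_sub_of_binary P hx0 hx1 fun _ => 1

end BinaryTreatment

/-- Independence of `z` from `(x0, x1, y0, y1)`, in the form: the indicator of `z` is
uncorrelated with every function of them. -/
def ExogenousInstrument (P : Ω → ℝ) (z : Ω → Bool) (x0 x1 : Ω → ℕ) (y0 y1 : Ω → ℝ) : Prop :=
  ∀ g : ℕ → ℕ → ℝ → ℝ → ℝ,
    Uncorrelated P (fun ω => if z ω then 1 else 0) fun ω => g (x0 ω) (x1 ω) (y0 ω) (y1 ω)

namespace ExogenousInstrument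

variable {P : Ω → ℝ} {z : Ω → Bool} {x0 x1 : Ω → ℕ} {y0 y1 : Ω → ℝ}

lemma condExp_eq_true (hI : ExogenousInstrument P z x0 x1 y0 y1)
    (hz : pr P (fun ω => z ω = true) ≠ 0) (g : ℕ → ℕ → ℝ → ℝ → ℝ) {f : Ω → ℝ}
    (hf : ∀ ω, z ω = true → f ω = g (x0 ω) (x1 ω) (y0 ω) (y1 ω)) :
    condExp P f (fun ω => z ω = true) = expec P fun ω => g (x0 ω) (x1 ω) (y0 ω) (y1 ω) :=
  (condExp_congr P hf).trans (condExp_eq_expec_of_uncorrelated P (hI g) hz)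

lemma condExp_eq_false (hI : ExogenousInstrument P z x0 x1 y0 y1) (hP : ∑ ω, P ω = 1)
    (hz : pr P (fun ω => z ω = false) ≠ 0) (g : ℕ → ℕ → ℝ → ℝ → ℝ) {f : Ω → ℝ}
    (hf : ∀ ω, z ω = false → f ω = g (x0 ω) (x1 ω) (y0 ω) (y1 ω)) :
    condExp P f (fun ω => z ω = false) = expec P fun ω => g (x0 ω) (x1 ω) (y0 ω) (y1 ω) := by
  rw [condExp_congr P hf]
  simp only [← Bool.not_eq_true] at hz ⊢
  exact condExp_eq_expec_of_uncorrelated P ((hI g).indicator_compl hP) hz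

variable {x : Ω → ℕ} {y : Ω → ℝ}

lemma condExp_sub_condExp_treatment (hI : ExogenousInstrument P z x0 x1 y0 y1)
    (hP : ∑ ω, P ω = 1) (hz1 : pr P (fun ω => z ω = true) ≠ 0)
    (hz0 : pr P (fun ω => z ω = false) ≠ 0) (hx : ∀ ω, x ω = if z ω then x1 ω else x0 ω) :
    condExp P (fun ω => (x ω : ℝ)) (fun ω => z ω = true)
        - condExp P (fun ω => (x ω : ℝ)) (fun ω => z ω = false)
      = expec P fun ω => (x1 ω : ℝ) - x0 ω := by
  rw [hI.condExp_eq_true hz1 (fun _ b _ _ => b) fun ω h => by simp [hx, h],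
    hI.condExp_eq_false hP hz0 (fun a _ _ _ => a) fun ω h => by simp [hx, h], expec_sub]

lemma condExp_sub_condExp_outcome (hI : ExogenousInstrument P z x0 x1 y0 y1)
    (hP : ∑ ω, P ω = 1) (hz1 : pr P (fun ω => z ω = true) ≠ 0)
    (hz0 : pr P (fun ω => z ω = false) ≠ 0) (hx : ∀ ω, x ω = if z ω then x1 ω else x0 ω)
    (hy : ∀ ω, y ω = y0 ω + (y1 ω - y0 ω) * (x ω : ℝ)) :
    condExp P y (fun ω => z ω = true) - condExp P y (fun ω => z ω = false)
      = expec P fun ω => (y1 ω - y0 ω) * ((x1 ω : ℝ) - x0 ω) := by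
  rw [hI.condExp_eq_true hz1 (fun _ b c d => c + (d - c) * b) fun ω h => by simp [hy, hx, h],
    hI.condExp_eq_false hP hz0 (fun a _ c d => c + (d - c) * a) fun ω h => by simp [hy, hx, h],
    ← expec_sub]
  congr 1
  ext ω
  ring

end ExogenousInstrument

lemma div_sub_neg_or_neg_div_sub_neg {a b : ℝ} (ha : 0 < a) (hb : 0 < b) (hab : a ≠ b) :
    a / (a - b) < 0 ∨ -b / (a - b) < 0 := by
  rcases hab.lt_or_gt with h | h
  · exact Or.inl (div_neg_of_pos_of_neg ha (by linarith))
  · exact Or.inr (div_neg_of_neg_of_pos (by linarith) (by linarith))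

theorem wald_with_defiers_general
    (P : Ω → ℝ) (hPsum : ∑ ω, P ω = 1)
    (z : Ω → Bool) (x0 x1 : Ω → ℕ) (y0 y1 : Ω → ℝ)
    (hx0le : ∀ ω, x0 ω ≤ 1) (hx1le : ∀ ω, x1 ω ≤ 1)
    (x : Ω → ℕ) (hx : ∀ ω, x ω = if z ω then x1 ω else x0 ω)
    (y : Ω → ℝ) (hy : ∀ ω, y ω = y0 ω + (y1 ω - y0 ω) * (x ω : ℝ))
    (hindep : ∀ g : ℕ → ℕ → ℝ → ℝ → ℝ,
      expec P (fun ω => (if z ω then (1 : ℝ) else 0) * g (x0 ω) (x1 ω) (y0 ω) (y1 ω))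
        = expec P (fun ω => if z ω then (1 : ℝ) else 0)
            * expec P (fun ω => g (x0 ω) (x1 ω) (y0 ω) (y1 ω)))
    (hz1 : 0 < pr P (fun ω => z ω = true))
    (hz0 : 0 < pr P (fun ω => z ω = false))
    (πc πd : ℝ)
    (hπc : πc = pr P (fun ω => x0 ω = 0 ∧ x1 ω = 1))
    (hπd : πd = pr P (fun ω => x0 ω = 1 ∧ x1 ω = 0))
    (hπcpos : 0 < πc) (hπdpos : 0 < πd) (hne : πc ≠ πd) :
    (condExp P y (fun ω => z ω = true) - condExp P y (fun ω => z ω = false))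
        / (condExp P (fun ω => (x ω : ℝ)) (fun ω => z ω = true)
            - condExp P (fun ω => (x ω : ℝ)) (fun ω => z ω = false))
      = condExp P (fun ω => y1 ω - y0 ω) (fun ω => x0 ω = 0 ∧ x1 ω = 1)
          * (πc / (πc - πd))
        - condExp P (fun ω => y1 ω - y0 ω) (fun ω => x0 ω = 1 ∧ x1 ω = 0)
          * (πd / (πc - πd)) ∧
    (πc / (πc - πd) < 0 ∨ -πd / (πc - πd) < 0) := by
  subst hπc hπd
  have hI : ExogenousInstrument P z x0 x1 y0 y1 := hindep
  refine ⟨?_, div_sub_neg_or_neg_div_sub_neg hπcpos hπdpos hne⟩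
  rw [hI.condExp_sub_condExp_outcome hPsum hz1.ne' hz0.ne' hx hy,
    hI.condExp_sub_condExp_treatment hPsum hz1.ne' hz0.ne' hx,
    expec_mul_sub_of_binary P hx0le hx1le, expec_sub_of_binary P hx0le hx1le,
    sum_ite_mul_eq_condExp_mul_pr P hπcpos.ne', sum_ite_mul_eq_condExp_mul_pr P hπdpos.ne',
    sub_div, mul_div_assoc, mul_div_assoc]

/-- with both compliers and defiers, the Wald estimator is a
weighted average of the complier and defier treatment effects, with one
negative weight. -/
theorem wald_with_defiers
    (P : Ω → ℝ) (hP : ∀ ω, 0 ≤ P ω) (hPsum : ∑ ω, P ω = 1)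
    (z : Ω → Bool) (x0 x1 : Ω → ℕ) (y0 y1 : Ω → ℝ)
    (hx0le : ∀ ω, x0 ω ≤ 1) (hx1le : ∀ ω, x1 ω ≤ 1)
    (x : Ω → ℕ) (hx : ∀ ω, x ω = if z ω then x1 ω else x0 ω)
    (y : Ω → ℝ) (hy : ∀ ω, y ω = y0 ω + (y1 ω - y0 ω) * (x ω : ℝ))
    (hindep : ∀ g : ℕ → ℕ → ℝ → ℝ → ℝ,
      expec P (fun ω => (if z ω then (1 : ℝ) else 0) * g (x0 ω) (x1 ω) (y0 ω) (y1 ω))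
        = expec P (fun ω => if z ω then (1 : ℝ) else 0)
            * expec P (fun ω => g (x0 ω) (x1 ω) (y0 ω) (y1 ω)))
    (hz1 : 0 < pr P (fun ω => z ω = true))
    (hz0 : 0 < pr P (fun ω => z ω = false))
    (πc πd : ℝ)
    (hπc : πc = pr P (fun ω => x0 ω = 0 ∧ x1 ω = 1))
    (hπd : πd = pr P (fun ω => x0 ω = 1 ∧ x1 ω = 0))
    (hπcpos : 0 < πc) (hπdpos : 0 < πd) (hne : πc ≠ πd) :
    (condExp P y (fun ω => z ω = true) - condExp P y (fun ω => z ω = false))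
        / (condExp P (fun ω => (x ω : ℝ)) (fun ω => z ω = true)
            - condExp P (fun ω => (x ω : ℝ)) (fun ω => z ω = false))
      = condExp P (fun ω => y1 ω - y0 ω) (fun ω => x0 ω = 0 ∧ x1 ω = 1)
          * (πc / (πc - πd))
        - condExp P (fun ω => y1 ω - y0 ω) (fun ω => x0 ω = 1 ∧ x1 ω = 0)
          * (πd / (πc - πd)) ∧
    (πc / (πc - πd) < 0 ∨ -πd / (πc - πd) < 0) :=
  wald_with_defiers_general P hPsum z x0 x1 y0 y1 hx0le hx1le x hx y hy hindep hz1 hz0 πc πd hπc hπd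
    hπcpos hπdpos hne
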